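/- For a smooth toric surface X_A coming from a point configuration A ⊂ ℤ² with convex hull Q, the degree of the Hurwitz form in Plücker coordinates, computed as (1/2)·Σ_i ξ_T(ω_i) for any triangulation T where ξ_T = 2η_{T,2} − η_{T,1}, equals 3·vol(Q) − vol(∂Q). -/

import Mathlib

open MeasureTheory

/-- Embedding of lattice points into the plane. -/
noncomputable def emb : ℤ × ℤ → ℝ × ℝ := fun p => ((p.1 : ℝ), (p.2 : ℝ))

/-- Normalized area of a planar region: twice its Lebesgue measure. -/
noncomputable def nvol2 (s : Set (ℝ × ℝ)) : ℝ := 2 * (volume s).toReal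

/-- The closed triangle spanned by a triple of lattice points. -/
noncomputable def triSet (σ : Fin 3 → ℤ × ℤ) : Set (ℝ × ℝ) :=
  convexHull ℝ (emb '' Set.range σ)

/-- Lattice length of the segment from `e.1` to `e.2`. -/
def llen (e : (ℤ × ℤ) × (ℤ × ℤ)) : ℕ :=
  Int.gcd (e.2.1 - e.1.1) (e.2.2 - e.1.2)

/-- The closed segment spanned by an edge. -/
noncomputable def seg (e : (ℤ × ℤ) × (ℤ × ℤ)) : Set (ℝ × ℝ) :=
  segment ℝ (emb e.1) (emb e.2)

/-- `η_{T,2}(ω)`. -/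
noncomputable def eta2 (T : Finset (Fin 3 → ℤ × ℤ)) (ω : ℤ × ℤ) : ℝ :=
  ∑ σ ∈ T, if ∃ i, σ i = ω then nvol2 (triSet σ) else 0

/-- `η_{T,1}(ω)`. -/
noncomputable def eta1 (E : Finset ((ℤ × ℤ) × (ℤ × ℤ))) (ω : ℤ × ℤ) : ℝ :=
  ∑ e ∈ E, if e.1 = ω ∨ e.2 = ω then (llen e : ℝ) else 0

/-- The Hurwitz vector `ξ_T = 2η_{T,2} − η_{T,1}`. -/
noncomputable def xiT (T : Finset (Fin 3 → ℤ × ℤ))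
    (E : Finset ((ℤ × ℤ) × (ℤ × ℤ))) (ω : ℤ × ℤ) : ℝ :=
  2 * eta2 T ω - eta1 E ω

open Module Metric Finset Filter Topology

/-!
Exchanging the order of summation, every triangle of `T` is counted once for each of its three
vertices and every boundary edge once for each of its two endpoints, so
`(1/2) Σ ξ_T = 3 vol(Q) - Σ_e ℓ(e)` with `ℓ` the lattice length. An edge of lattice length `ℓ`
carries `ℓ + 1` lattice points, so it remains to see that there are as many edge endpoints as
edges. This is the convex geometry of the boundary: a point in the relative interior of
an edge lies on no other edge, and every endpoint lies on exactly two edges. At most two, because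
the supporting line of `Q` along each edge leaves the other edges on one side, which is
impossible for three rays from one point of the plane unless two of them point the same way. At least two,
because the segment from an interior point of `Q` near the endpoint to a point just behind it on
the supporting line of its edge crosses the boundary close to the endpoint but off that edge.
-/

section PlaneLinearAlgebra

variable {V : Type*} [AddCommGroup V] [Module ℝ V]

theorem exists_smul_add_smul_eq_of_linearIndependent (hV : finrank ℝ V = 2) {u v : V}
    (h : LinearIndependent ℝ ![u, v]) (w : V) : ∃ α β : ℝ, α • u + β • v = w := by
  have hspan := h.span_eq_top_of_card_eq_finrank (by simp [hV])
  rw [Matrix.range_cons_cons_empty] at hspan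
  exact Submodule.mem_span_pair.1 (hspan ▸ Submodule.mem_top)

theorem not_linearIndependent_of_apply_eq_zero (hV : finrank ℝ V = 2) {f : Dual ℝ V}
    (hf : f ≠ 0) {u v : V} (hu : f u = 0) (hv : f v = 0) : ¬LinearIndependent ℝ ![u, v] := by
  refine fun h => hf (LinearMap.ext fun w => ?_)
  obtain ⟨α, β, rfl⟩ := exists_smul_add_smul_eq_of_linearIndependent hV h w
  simp [hu, hv]

theorem sameRay_or_sameRay_of_sameRay_neg (hV : finrank ℝ V = 2) {f : Dual ℝ V} (hf : f ≠ 0)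
    {u v w : V} (hu : u ≠ 0) (hv : v ≠ 0) (huv : SameRay ℝ u (-v)) (hfu : f u ≤ 0)
    (hfv : f v ≤ 0) (hfw : f w = 0) : SameRay ℝ w u ∨ SameRay ℝ w v := by
  obtain ⟨r, hr, hru⟩ := huv.exists_pos_left hu (neg_ne_zero.2 hv)
  have hfu0 : f u = 0 := by
    have : f v = -(r * f u) := by rw [← neg_neg v, ← hru]; simp
    nlinarith
  rcases (sameRay_or_sameRay_neg_iff_not_linearIndependent).2
    (not_linearIndependent_of_apply_eq_zero hV hf hfw hfu0) with h | h
  · exact Or.inl h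
  · refine Or.inr (h.trans ?_ fun h0 => absurd (neg_eq_zero.1 h0) hu)
    have : v = r • -u := by rw [smul_neg, hru, neg_neg]
    rw [this]
    exact SameRay.sameRay_pos_smul_right _ hr

theorem exists_sameRay_of_apply_nonpos (hV : finrank ℝ V = 2) {d : Fin 3 → V}
    {f : Fin 3 → Dual ℝ V} (hd : ∀ k, d k ≠ 0) (hf : ∀ k, f k ≠ 0) (hfd : ∀ k, f k (d k) = 0)
    (hle : ∀ k l, f k (d l) ≤ 0) : ∃ k l, k ≠ l ∧ SameRay ℝ (d k) (d l) := by
  by_contra! hne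
  have hli : ∀ k l, k ≠ l → LinearIndependent ℝ ![d k, d l] := by
    intro k l hkl
    by_contra hdep
    rcases (sameRay_or_sameRay_neg_iff_not_linearIndependent).2 hdep with h | h
    · exact hne k l hkl h
    obtain ⟨m, hmk, hml⟩ := (by decide : ∀ k l : Fin 3, ∃ m, m ≠ k ∧ m ≠ l) k l
    rcases sameRay_or_sameRay_of_sameRay_neg hV (hf m) (hd k) (hd l) h (hle m k) (hle m l)
      (hfd m) with h' | h'
    exacts [hne m k hmk h', hne m l hml h']
  have hlt : ∀ k l, k ≠ l → f k (d l) < 0 := fun k l hkl =>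
    (hle k l).lt_of_ne fun h0 =>
      not_linearIndependent_of_apply_eq_zero hV (hf k) (hfd k) h0 (hli k l hkl)
  obtain ⟨α, β, hαβ⟩ := exists_smul_add_smul_eq_of_linearIndependent hV (hli 0 1 (by decide)) (d 2)
  have h0 := congrArg (f 0) hαβ
  have h1 := congrArg (f 1) hαβ
  have h2 := congrArg (f 2) hαβ
  simp only [map_add, map_smul, smul_eq_mul, hfd, mul_zero, zero_add, add_zero] at h0 h1 h2
  -- `f 0` and `f 1` force `d 2` into the open cone spanned by `d 0` and `d 1`,
  -- on which `f 2` is negative.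
  have hβ : 0 < β := by nlinarith [hlt 0 1 (by decide), hlt 0 2 (by decide)]
  have hα : 0 < α := by nlinarith [hlt 1 0 (by decide), hlt 1 2 (by decide)]
  nlinarith [hlt 2 0 (by decide), hlt 2 1 (by decide)]

section Segments

variable {V : Type*} [AddCommGroup V] [Module ℝ V]

theorem mem_segment_or_mem_segment_of_sameRay {x y y' : V} (h : SameRay ℝ (y - x) (y' - x)) :
    y ∈ segment ℝ x y' ∨ y' ∈ segment ℝ x y := by
  rcases eq_or_ne y x with rfl | hy
  · exact Or.inl (left_mem_segment ℝ _ _)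
  rcases eq_or_ne y' x with rfl | hy'
  · exact Or.inr (left_mem_segment ℝ _ _)
  obtain ⟨r, hr, hry⟩ := h.exists_pos_left (sub_ne_zero.2 hy) (sub_ne_zero.2 hy')
  rw [segment_eq_image', segment_eq_image']
  rcases le_total r 1 with hr1 | hr1
  · exact Or.inr ⟨r, ⟨hr.le, hr1⟩, by simp only [hry, add_sub_cancel]⟩
  · refine Or.inl ⟨r⁻¹, ⟨inv_nonneg.2 hr.le, inv_le_one_of_one_le₀ hr1⟩, ?_⟩
    simp only [← hry, smul_smul, inv_mul_cancel₀ hr.ne', one_smul, add_sub_cancel]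

theorem not_sameRay_sub_of_mem_openSegment {a b x : V} (hab : a ≠ b)
    (hx : x ∈ openSegment ℝ a b) : ¬SameRay ℝ (a - x) (b - x) := by
  have hxa : x ≠ a := by rintro rfl; exact hab (left_mem_openSegment_iff.1 hx)
  have hxb : x ≠ b := by rintro rfl; exact hab (right_mem_openSegment_iff.1 hx)
  have hsame : SameRay ℝ (x - a) (b - x) :=
    mem_segment_iff_sameRay.1 (openSegment_subset_segment ℝ a b hx)
  intro h
  have : SameRay ℝ (a - x) (-(a - x)) := by
    refine h.trans ?_ fun h0 => absurd (sub_eq_zero.1 h0) hxb.symm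
    rw [neg_sub]
    exact hsame.symm
  exact hxa (sub_eq_zero.1 (eq_zero_of_sameRay_self_neg this)).symm

theorem sub_smul_sub_notMem_segment {x y : V} (hxy : x ≠ y) {s : ℝ} (hs : 0 < s) :
    x - s • (y - x) ∉ segment ℝ x y := by
  rw [segment_eq_image']
  rintro ⟨θ, ⟨hθ, -⟩, h⟩
  have : (θ + s) • (y - x) = 0 := by
    have h' : x + θ • (y - x) = x + -(s • (y - x)) := by rw [← sub_eq_add_neg]; exact h
    rw [add_smul, add_left_cancel h', neg_add_cancel]
  rcases smul_eq_zero.1 this with h0 | h0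
  · linarith
  · exact hxy (sub_eq_zero.1 h0).symm

theorem eq_right_of_mem_segment_of_apply_eq {f : Dual ℝ V} {p q c : V} (hpq : f p ≠ f q)
    (hc : c ∈ segment ℝ p q) (hfc : f c = f q) : c = q := by
  obtain ⟨α, β, -, -, hαβ, rfl⟩ := hc
  have hα : α = 0 := by
    simp only [map_add, map_smul, smul_eq_mul] at hfc
    have : α * (f p - f q) = 0 := by linear_combination hfc - f q * hαβ
    exact (mul_eq_zero.1 this).resolve_right (sub_ne_zero.2 hpq)
  obtain rfl : β = 1 := by linarith
  simp [hα]

theorem exists_mem_segment_ne {a b : V} (hab : a ≠ b) (x : V) : ∃ y ∈ segment ℝ a b, y ≠ x := by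
  by_cases hax : a = x
  · exact ⟨b, right_mem_segment ℝ a b, fun hbx => hab (hax.trans hbx.symm)⟩
  · exact ⟨a, left_mem_segment ℝ a b, hax⟩

end Segments

section ConvexBody

open Set

variable {V : Type*} [AddCommGroup V] [Module ℝ V] [TopologicalSpace V] [IsTopologicalAddGroup V]
  [ContinuousSMul ℝ V] {Q : Set V}

theorem exists_dual_of_segment_subset_frontier (hQ : Convex ℝ Q) (hQc : IsClosed Q)
    (hQi : (interior Q).Nonempty) {a b : V} (h : segment ℝ a b ⊆ frontier Q) :
    ∃ f : StrongDual ℝ V, f ≠ 0 ∧ (∀ z ∈ segment ℝ a b, f z = f a) ∧ ∀ q ∈ Q, f q ≤ f a := by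
  have hdisj : Disjoint (interior Q) (segment ℝ a b) :=
    Set.disjoint_right.2 fun z hz => (h hz).2
  obtain ⟨f, u, hf, hQu, hsu⟩ := geometric_hahn_banach_of_nonempty_interior hQ
    (convex_segment a b) hdisj hQi ⟨a, left_mem_segment ℝ a b⟩
  have hfu : ∀ z ∈ segment ℝ a b, f z = u := fun z hz =>
    le_antisymm (hQu z (hQc.frontier_subset (h hz))) (hsu z hz)
  refine ⟨f, hf, fun z hz => by rw [hfu z hz, hfu a (left_mem_segment ℝ a b)], fun q hq => ?_⟩
  rw [hfu a (left_mem_segment ℝ a b)]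
  exact hQu q hq

theorem StrongDual.apply_lt_of_mem_interior {f : StrongDual ℝ V} (hf : f ≠ 0) {c : ℝ}
    (h : ∀ q ∈ Q, f q ≤ c) {z : V} (hz : z ∈ interior Q) : f z < c := by
  have : f '' interior Q ⊆ interior (Iic c) :=
    interior_maximal (image_subset_iff.2 fun q hq => h q (interior_subset hq))
      (f.isOpenMap_of_ne_zero hf _ isOpen_interior)
  simpa using this (mem_image_of_mem f hz)

theorem exists_mem_segment_mem_frontier {p q : V} (hp : p ∈ interior Q) (hq : q ∉ interior Q) :
    ∃ c ∈ segment ℝ p q, c ∈ frontier Q := by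
  by_contra! h
  refine hq ((convex_segment p q).isPreconnected.subset_of_closure_inter_subset isOpen_interior
    ⟨p, left_mem_segment ℝ p q, hp⟩ ?_ (right_mem_segment ℝ p q))
  rintro c ⟨hc, hcpq⟩
  by_contra hci
  exact h c hcpq ⟨closure_mono interior_subset hc, hci⟩

end ConvexBody

section SegmentIncidence

open scoped Classical

noncomputable def segmentEndpoints {V ι : Type*} (E : Finset ι) (a b : ι → V) : Finset V :=
  E.image a ∪ E.image b

theorem mem_segmentEndpoints {V ι : Type*} {E : Finset ι} {a b : ι → V} {x : V} :
    x ∈ segmentEndpoints E a b ↔ ∃ i ∈ E, x = a i ∨ x = b i := by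
  simp only [segmentEndpoints, Finset.mem_union, Finset.mem_image]
  constructor
  · rintro (⟨i, hi, rfl⟩ | ⟨i, hi, rfl⟩)
    exacts [⟨i, hi, Or.inl rfl⟩, ⟨i, hi, Or.inr rfl⟩]
  · rintro ⟨i, hi, rfl | rfl⟩
    exacts [Or.inl ⟨i, hi, rfl⟩, Or.inr ⟨i, hi, rfl⟩]

variable {V ι : Type*} [AddCommGroup V] [Module ℝ V]

noncomputable def segmentDegree (E : Finset ι) (a b : ι → V) (x : V) : ℕ :=
  #{i ∈ E | x ∈ segment ℝ (a i) (b i)}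

theorem sum_segmentDegree_eq_sum_card (E : Finset ι) (a b : ι → V) (P : Finset V) :
    ∑ x ∈ P, segmentDegree E a b x = ∑ i ∈ E, #{x ∈ P | x ∈ segment ℝ (a i) (b i)} :=
  sum_card_bipartiteAbove_eq_sum_card_bipartiteBelow _

end SegmentIncidence

theorem exists_pos_le_one_add_smul_mem_ball {V : Type*} [NormedAddCommGroup V]
    [NormedSpace ℝ V] (x u v : V) {r : ℝ} (hr : 0 < r) :
    ∃ s : ℝ, 0 < s ∧ s ≤ 1 ∧ x + s • u ∈ ball x r ∧ x - s • v ∈ ball x r := by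
  have hu : Tendsto (fun s : ℝ => x + s • u) (𝓝 0) (𝓝 x) :=
    Continuous.tendsto' (by fun_prop) 0 x (by simp)
  have hv : Tendsto (fun s : ℝ => x - s • v) (𝓝 0) (𝓝 x) :=
    Continuous.tendsto' (by fun_prop) 0 x (by simp)
  obtain ⟨s, ⟨hs1, hsu, hsv⟩, hs0⟩ := ((((eventually_le_nhds one_pos).and
    ((hu.eventually (ball_mem_nhds x hr)).and (hv.eventually (ball_mem_nhds x hr)))).filter_mono
    nhdsWithin_le_nhds).and (self_mem_nhdsWithin (s := Set.Ioi 0))).exists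
  exact ⟨s, hs0, hs1, hsu, hsv⟩

section BoundarySubdivision

open scoped Classical

variable {V ι : Type*} [NormedAddCommGroup V] [NormedSpace ℝ V]

structure IsBoundarySubdivision (Q : Set V) (E : Finset ι) (a b : ι → V) : Prop where
  convex : Convex ℝ Q
  isClosed : IsClosed Q
  interior_nonempty : (interior Q).Nonempty
  ne : ∀ i ∈ E, a i ≠ b i
  biUnion_segment : ⋃ i ∈ E, segment ℝ (a i) (b i) = frontier Q
  subsingleton_inter : ∀ i ∈ E, ∀ j ∈ E, i ≠ j →
    (segment ℝ (a i) (b i) ∩ segment ℝ (a j) (b j)).Subsingleton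

namespace IsBoundarySubdivision

variable {Q : Set V} {E : Finset ι} {a b : ι → V} (hS : IsBoundarySubdivision Q E a b)
include hS

theorem segment_subset_frontier {i : ι} (hi : i ∈ E) : segment ℝ (a i) (b i) ⊆ frontier Q :=
  hS.biUnion_segment ▸ Set.subset_biUnion_of_mem (u := fun i => segment ℝ (a i) (b i)) hi

theorem segment_subset {i : ι} (hi : i ∈ E) : segment ℝ (a i) (b i) ⊆ Q :=
  (hS.segment_subset_frontier hi).trans hS.isClosed.frontier_subset

theorem exists_mem_segment_of_mem_frontier {x : V} (hx : x ∈ frontier Q) :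
    ∃ i ∈ E, x ∈ segment ℝ (a i) (b i) := by
  rw [← hS.biUnion_segment] at hx
  simpa using hx

theorem exists_dual {i : ι} (hi : i ∈ E) {x : V} (hx : x ∈ segment ℝ (a i) (b i)) :
    ∃ f : StrongDual ℝ V, f ≠ 0 ∧ (∀ z ∈ segment ℝ (a i) (b i), f z = f x) ∧
      ∀ q ∈ Q, f q ≤ f x := by
  obtain ⟨f, hf, hseg, hQ⟩ := exists_dual_of_segment_subset_frontier hS.convex hS.isClosed
    hS.interior_nonempty (hS.segment_subset_frontier hi)
  exact ⟨f, hf, fun z hz => by rw [hseg z hz, hseg x hx], fun q hq => hseg x hx ▸ hQ q hq⟩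

theorem exists_pos_forall_mem_ball (x : V) :
    ∃ r > 0, ∀ w ∈ ball x r, w ∈ frontier Q →
      ∃ i ∈ E, x ∈ segment ℝ (a i) (b i) ∧ w ∈ segment ℝ (a i) (b i) := by
  set U := ⋃ i ∈ {i ∈ E | x ∉ segment ℝ (a i) (b i)}, segment ℝ (a i) (b i)
  have hU : IsClosed U := isClosed_biUnion_finset fun i _ => by
    rw [← convexHull_pair]
    exact ((Set.toFinite _).isCompact_convexHull ℝ).isClosed
  have hxU : x ∉ U := by simp [U]
  obtain ⟨r, hr, hball⟩ := Metric.isOpen_iff.1 hU.isOpen_compl x hxU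
  refine ⟨r, hr, fun w hw hwQ => ?_⟩
  obtain ⟨i, hi, hwi⟩ := hS.exists_mem_segment_of_mem_frontier hwQ
  refine ⟨i, hi, ?_, hwi⟩
  by_contra hxi
  exact hball hw (Set.mem_biUnion (mem_filter.2 ⟨hi, hxi⟩) hwi)

theorem eq_of_sameRay {i j : ι} (hi : i ∈ E) (hj : j ∈ E) {x y y' : V}
    (hxi : x ∈ segment ℝ (a i) (b i)) (hyi : y ∈ segment ℝ (a i) (b i))
    (hxj : x ∈ segment ℝ (a j) (b j)) (hyj : y' ∈ segment ℝ (a j) (b j))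
    (hy : y ≠ x) (hy' : y' ≠ x) (h : SameRay ℝ (y - x) (y' - x)) : i = j := by
  by_contra hij
  have hsub := hS.subsingleton_inter i hi j hj hij
  rcases mem_segment_or_mem_segment_of_sameRay h with h' | h'
  · exact hy (hsub ⟨hyi, (convex_segment _ _).segment_subset hxj hyj h'⟩ ⟨hxi, hxj⟩)
  · exact hy' (hsub ⟨(convex_segment _ _).segment_subset hxi hyi h', hyj⟩ ⟨hxi, hxj⟩)

theorem exists_eq_of_three_rays (hV : finrank ℝ V = 2) {x : V} {i : Fin 3 → ι}
    {y : Fin 3 → V} (hi : ∀ k, i k ∈ E) (hx : ∀ k, x ∈ segment ℝ (a (i k)) (b (i k)))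
    (hy : ∀ k, y k ∈ segment ℝ (a (i k)) (b (i k))) (hyx : ∀ k, y k ≠ x) :
    ∃ k l, k ≠ l ∧ i k = i l ∧ SameRay ℝ (y k - x) (y l - x) := by
  choose f hf hfseg hfQ using fun k => hS.exists_dual (hi k) (hx k)
  obtain ⟨k, l, hkl, h⟩ := exists_sameRay_of_apply_nonpos hV (d := fun k => y k - x)
    (f := fun k => (f k : Dual ℝ V)) (fun k => sub_ne_zero.2 (hyx k))
    (fun k => by
      rw [Ne, ← ContinuousLinearMap.toLinearMap_zero, ContinuousLinearMap.coe_inj]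
      exact hf k) (fun k => by simp [hfseg k (y k) (hy k)])
    (fun k l => by simpa using hfQ k (y l) (hS.segment_subset (hi l) (hy l)))
  exact ⟨k, l, hkl,
    hS.eq_of_sameRay (hi k) (hi l) (hx k) (hy k) (hx l) (hy l) (hyx k) (hyx l) h, h⟩

theorem eq_of_mem_openSegment (hV : finrank ℝ V = 2) {i j : ι} (hi : i ∈ E) (hj : j ∈ E)
    {x : V} (hx : x ∈ openSegment ℝ (a i) (b i)) (hxj : x ∈ segment ℝ (a j) (b j)) : j = i := by
  obtain ⟨y, hyj, hyx⟩ := exists_mem_segment_ne (hS.ne j hj) x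
  have hxi := openSegment_subset_segment ℝ _ _ hx
  have hai : a i ≠ x := by
    rintro rfl
    exact hS.ne i hi (left_mem_openSegment_iff.1 hx)
  have hbi : b i ≠ x := by
    rintro rfl
    exact hS.ne i hi (right_mem_openSegment_iff.1 hx)
  obtain ⟨k, l, hkl, hikl, hray⟩ := hS.exists_eq_of_three_rays hV (x := x) (i := ![i, i, j])
    (y := ![a i, b i, y]) (by simp [Fin.forall_fin_succ, hi, hj])
    (by simp [Fin.forall_fin_succ, hxi, hxj])
    (by simp [Fin.forall_fin_succ, hyj, left_mem_segment, right_mem_segment])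
    (by simp [Fin.forall_fin_succ, hai, hbi, hyx])
  -- The rays from `x` towards `a i` and `b i` are opposite, so the overlapping pair involves `j`.
  have hopp := not_sameRay_sub_of_mem_openSegment (hS.ne i hi) hx
  fin_cases k <;> fin_cases l <;> simp at hkl hikl hray
  all_goals first
    | exact hikl | exact hikl.symm | exact absurd hray hopp | exact absurd hray.symm hopp

theorem segmentDegree_le_two (hV : finrank ℝ V = 2) (x : V) : segmentDegree E a b x ≤ 2 := by
  by_contra! h
  obtain ⟨i₁, i₂, i₃, h₁, h₂, h₃, h₁₂, h₁₃, h₂₃⟩ := two_lt_card_iff.1 h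
  simp only [mem_filter] at h₁ h₂ h₃
  set i := ![i₁, i₂, i₃]
  have hi : ∀ k, i k ∈ E ∧ x ∈ segment ℝ (a (i k)) (b (i k)) := by
    simp [i, Fin.forall_fin_succ, *]
  choose y hy hyx using fun k => exists_mem_segment_ne (hS.ne _ (hi k).1) x
  obtain ⟨k, l, hkl, hikl, -⟩ := hS.exists_eq_of_three_rays hV (fun k => (hi k).1)
    (fun k => (hi k).2) hy hyx
  fin_cases k <;> fin_cases l <;> simp_all [i]

theorem two_le_segmentDegree {i : ι} (hi : i ∈ E) {x y : V} (hxy : x ≠ y)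
    (hseg : segment ℝ (a i) (b i) = segment ℝ x y) : 2 ≤ segmentDegree E a b x := by
  have hxi : x ∈ segment ℝ (a i) (b i) := hseg ▸ left_mem_segment ℝ x y
  obtain ⟨f, hf, hfseg, hfQ⟩ := hS.exists_dual hi hxi
  obtain ⟨z, hz⟩ := hS.interior_nonempty
  have hfz : f z < f x := StrongDual.apply_lt_of_mem_interior hf hfQ hz
  obtain ⟨r, hr, hloc⟩ := hS.exists_pos_forall_mem_ball x
  obtain ⟨s, hs0, hs1, hp, hq⟩ := exists_pos_le_one_add_smul_mem_ball x (z - x) (y - x) hr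
  -- `q` lies on the supporting line of the edge `[x, y]`, just behind `x`.
  set p := x + s • (z - x)
  set q := x - s • (y - x)
  have hpint : p ∈ interior Q := by
    convert hS.convex.combo_interior_closure_mem_interior hz
      (subset_closure (hS.segment_subset hi hxi)) hs0 (sub_nonneg.2 hs1) (add_sub_cancel s 1)
      using 1
    simp only [p]
    module
  have hfy : f y = f x := hfseg y (hseg ▸ right_mem_segment ℝ x y)
  have hfq : f q = f x := by simp [q, hfy]
  obtain ⟨c, hcpq, hc⟩ := exists_mem_segment_mem_frontier hpint
    fun h => (StrongDual.apply_lt_of_mem_interior hf hfQ h).ne hfq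
  obtain ⟨j, hj, hxj, hcj⟩ := hloc c ((convex_ball x r).segment_subset hp hq hcpq) hc
  have hji : j ≠ i := by
    rintro rfl
    have hfp : f p ≠ f q := by
      rw [hfq]
      simp only [p, map_add, map_smul, map_sub, smul_eq_mul]
      nlinarith
    have hcq := eq_right_of_mem_segment_of_apply_eq (f := (f : Dual ℝ V)) hfp hcpq
      (by simp [hfq, hfseg c hcj])
    rw [hseg, hcq] at hcj
    exact sub_smul_sub_notMem_segment hxy hs0 hcj
  exact one_lt_card.2 ⟨i, mem_filter.2 ⟨hi, hxi⟩, j, mem_filter.2 ⟨hj, hxj⟩, hji.symm⟩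

theorem segmentDegree_eq_one (hV : finrank ℝ V = 2) {i : ι} (hi : i ∈ E) {x : V}
    (hx : x ∈ openSegment ℝ (a i) (b i)) : segmentDegree E a b x = 1 := by
  refine card_eq_one.2 ⟨i, eq_singleton_iff_unique_mem.2
    ⟨mem_filter.2 ⟨hi, openSegment_subset_segment ℝ _ _ hx⟩, fun j hj => ?_⟩⟩
  rw [mem_filter] at hj
  exact hS.eq_of_mem_openSegment hV hi hj.1 hx hj.2

theorem segmentDegree_eq_two (hV : finrank ℝ V = 2) {i : ι} (hi : i ∈ E) {x : V}
    (hx : x = a i ∨ x = b i) : segmentDegree E a b x = 2 := by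
  refine le_antisymm (hS.segmentDegree_le_two hV x) ?_
  rcases hx with rfl | rfl
  · exact hS.two_le_segmentDegree hi (hS.ne i hi) rfl
  · exact hS.two_le_segmentDegree hi (hS.ne i hi).symm (segment_symm ℝ _ _)

theorem segmentDegree_of_mem_frontier (hV : finrank ℝ V = 2) {x : V} (hx : x ∈ frontier Q) :
    segmentDegree E a b x = if x ∈ segmentEndpoints E a b then 2 else 1 := by
  split_ifs with hend
  · obtain ⟨i, hi, hxi⟩ := mem_segmentEndpoints.1 hend
    exact hS.segmentDegree_eq_two hV hi hxi
  · obtain ⟨i, hi, hxi⟩ := hS.exists_mem_segment_of_mem_frontier hx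
    have hne : ∀ y, (y = a i ∨ y = b i) → y ≠ x := fun y hy hyx =>
      hend (mem_segmentEndpoints.2 ⟨i, hi, hyx ▸ hy⟩)
    exact hS.segmentDegree_eq_one hV hi (mem_openSegment_of_ne_left_right
      (hne _ (Or.inl rfl)) (hne _ (Or.inr rfl)) hxi)

theorem filter_segmentEndpoints_mem_segment (hV : finrank ℝ V = 2) {i : ι} (hi : i ∈ E) :
    {x ∈ segmentEndpoints E a b | x ∈ segment ℝ (a i) (b i)} = {a i, b i} := by
  ext x
  simp only [mem_filter, mem_insert, mem_singleton]
  constructor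
  · rintro ⟨hend, hxi⟩
    by_contra! hx
    obtain ⟨j, hj, hxj⟩ := mem_segmentEndpoints.1 hend
    have h1 := hS.segmentDegree_eq_one hV hi (mem_openSegment_of_ne_left_right
      (Ne.symm hx.1) (Ne.symm hx.2) hxi)
    rw [hS.segmentDegree_eq_two hV hj hxj] at h1
    exact absurd h1 (by decide)
  · rintro (rfl | rfl)
    exacts [⟨mem_segmentEndpoints.2 ⟨i, hi, Or.inl rfl⟩, left_mem_segment ℝ _ _⟩,
      ⟨mem_segmentEndpoints.2 ⟨i, hi, Or.inr rfl⟩, right_mem_segment ℝ _ _⟩]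

theorem card_segmentEndpoints (hV : finrank ℝ V = 2) : #(segmentEndpoints E a b) = #E := by
  have h := sum_segmentDegree_eq_sum_card E a b (segmentEndpoints E a b)
  have hdeg : ∀ x ∈ segmentEndpoints E a b, segmentDegree E a b x = 2 := fun x hx => by
    obtain ⟨i, hi, hxi⟩ := mem_segmentEndpoints.1 hx
    exact hS.segmentDegree_eq_two hV hi hxi
  have hcard : ∀ i ∈ E, #{x ∈ segmentEndpoints E a b | x ∈ segment ℝ (a i) (b i)} = 2 :=
    fun i hi => by rw [hS.filter_segmentEndpoints_mem_segment hV hi, card_pair (hS.ne i hi)]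
  rw [sum_congr rfl hdeg, sum_congr rfl hcard, sum_const, sum_const, smul_eq_mul,
    smul_eq_mul] at h
  omega

theorem sum_card_filter_mem_segment (hV : finrank ℝ V = 2) (P : Finset V)
    (hP : ∀ x ∈ P, x ∈ frontier Q) (hend : segmentEndpoints E a b ⊆ P) :
    ∑ i ∈ E, #{x ∈ P | x ∈ segment ℝ (a i) (b i)} = #P + #E := by
  rw [← sum_segmentDegree_eq_sum_card, ← hS.card_segmentEndpoints hV, ← inter_eq_right.2 hend,
    ← filter_mem_eq_inter, card_filter, card_eq_sum_ones, ← sum_add_distrib]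
  refine sum_congr rfl fun x hx => ?_
  rw [hS.segmentDegree_of_mem_frontier hV (hP x hx)]
  split_ifs <;> rfl

end IsBoundarySubdivision

end BoundarySubdivision

section LatticeSegments

theorem emb_injective : Function.Injective emb := fun p q h =>
  Prod.ext (by simpa [emb] using congrArg Prod.fst h) (by simpa [emb] using congrArg Prod.snd h)

theorem emb_add_zsmul (p v : ℤ × ℤ) (k : ℤ) : emb (p + k • v) = emb p + (k : ℝ) • emb v := by
  simp [emb]

theorem emb_sub (p q : ℤ × ℤ) : emb (p - q) = emb p - emb q := by
  simp [emb]

def primitiveDir (e : (ℤ × ℤ) × (ℤ × ℤ)) : ℤ × ℤ :=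
  ((e.2.1 - e.1.1) / llen e, (e.2.2 - e.1.2) / llen e)

variable {e : (ℤ × ℤ) × (ℤ × ℤ)}

theorem llen_pos (he : e.1 ≠ e.2) : 0 < llen e := by
  refine Int.gcd_pos_iff.2 (not_and_or.1 fun h => he (Prod.ext ?_ ?_)).symm
  · linarith [h.1]
  · linarith [h.2]

theorem llen_smul_primitiveDir (e : (ℤ × ℤ) × (ℤ × ℤ)) :
    (llen e : ℤ) • primitiveDir e = e.2 - e.1 :=
  Prod.ext (Int.mul_ediv_cancel' (Int.gcd_dvd_left _ _))
    (Int.mul_ediv_cancel' (Int.gcd_dvd_right _ _))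

theorem isCoprime_primitiveDir (he : e.1 ≠ e.2) :
    IsCoprime (primitiveDir e).1 (primitiveDir e).2 :=
  Int.isCoprime_iff_gcd_eq_one.2 (Int.gcd_div_gcd_div_gcd (llen_pos he))

theorem setOf_emb_mem_seg (he : e.1 ≠ e.2) :
    {z | emb z ∈ seg e} = (fun k : ℤ => e.1 + k • primitiveDir e) '' Set.Icc 0 (llen e : ℤ) := by
  have hg : (0 : ℝ) < llen e := by exact_mod_cast llen_pos he
  have hdir : emb e.2 - emb e.1 = (llen e : ℝ) • emb (primitiveDir e) := by
    rw [← emb_sub, ← llen_smul_primitiveDir, ← zero_add ((llen e : ℤ) • _), emb_add_zsmul]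
    simp [emb]
  ext z
  simp only [Set.mem_ofPred_eq, Set.mem_image, Set.mem_Icc, seg, segment_eq_image', hdir,
    smul_smul]
  constructor
  · rintro ⟨θ, ⟨hθ0, hθ1⟩, hθ⟩
    obtain ⟨m, n, hmn⟩ := isCoprime_primitiveDir he
    set v := primitiveDir e
    set w := z - e.1
    have hw : emb w = (θ * llen e) • emb v := by rw [emb_sub, ← hθ]; abel
    have hw1 : (w.1 : ℝ) = θ * llen e * v.1 := by simpa [emb] using congrArg Prod.fst hw
    have hw2 : (w.2 : ℝ) = θ * llen e * v.2 := by simpa [emb] using congrArg Prod.snd hw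
    have hmnR : (m : ℝ) * v.1 + n * v.2 = 1 := by exact_mod_cast hmn
    have hk : ((m * w.1 + n * w.2 : ℤ) : ℝ) = θ * llen e := by
      push_cast
      linear_combination (m : ℝ) * hw1 + (n : ℝ) * hw2 + θ * (llen e : ℝ) * hmnR
    refine ⟨m * w.1 + n * w.2, ⟨?_, ?_⟩, emb_injective ?_⟩
    · exact_mod_cast (hk ▸ mul_nonneg hθ0 hg.le : (0 : ℝ) ≤ _)
    · exact_mod_cast (hk ▸ mul_le_of_le_one_left hg.le hθ1 : _ ≤ (llen e : ℝ))
    · rw [emb_add_zsmul, hk, ← hθ]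
  · rintro ⟨k, ⟨hk0, hkg⟩, rfl⟩
    refine ⟨k / llen e, ⟨by positivity, div_le_one_of_le₀ (by exact_mod_cast hkg) hg.le⟩, ?_⟩
    rw [div_mul_cancel₀ _ hg.ne', emb_add_zsmul]

theorem ncard_setOf_emb_mem_seg (he : e.1 ≠ e.2) : {z | emb z ∈ seg e}.ncard = llen e + 1 := by
  have hv : primitiveDir e ≠ 0 := by
    intro h
    have := llen_smul_primitiveDir e
    rw [h, smul_zero, eq_comm, sub_eq_zero] at this
    exact he this.symm
  rw [setOf_emb_mem_seg he, Set.ncard_image_of_injective _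
    fun k k' h => smul_left_injective ℤ hv (add_left_cancel h), ← Finset.coe_Icc,
    Set.ncard_coe_finset, Int.card_Icc]
  omega

theorem finite_setOf_emb_mem_seg (he : e.1 ≠ e.2) : {z | emb z ∈ seg e}.Finite := by
  rw [setOf_emb_mem_seg he]
  exact (Set.finite_Icc _ _).image _

end LatticeSegments

theorem sum_llen_eq_ncard {Q : Set (ℝ × ℝ)} {E : Finset ((ℤ × ℤ) × (ℤ × ℤ))}
    (hS : IsBoundarySubdivision Q E (fun e => emb e.1) (fun e => emb e.2)) :
    ∑ e ∈ E, llen e = {p : ℤ × ℤ | emb p ∈ frontier Q}.ncard := by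
  classical
  have hne : ∀ e ∈ E, e.1 ≠ e.2 := fun e he h => hS.ne e he (congrArg emb h)
  have hfin : {p : ℤ × ℤ | emb p ∈ frontier Q}.Finite := by
    refine (E.finite_toSet.biUnion fun e he => finite_setOf_emb_mem_seg (hne e he)).subset
      fun p hp => ?_
    obtain ⟨e, he, hpe⟩ := hS.exists_mem_segment_of_mem_frontier hp
    exact Set.mem_biUnion he hpe
  set S := hfin.toFinset
  have hcard : ∀ e ∈ E, #{x ∈ S.image emb | x ∈ segment ℝ (emb e.1) (emb e.2)} = llen e + 1 :=
    fun e he => by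
    rw [filter_image, card_image_of_injective _ emb_injective,
      ← ncard_setOf_emb_mem_seg (hne e he), ← Set.ncard_coe_finset]
    congr 1
    ext z
    simpa [S, seg] using fun hz => hS.segment_subset_frontier he hz
  have key := hS.sum_card_filter_mem_segment (by simp) (S.image emb)
    (fun x hx => by
      obtain ⟨p, hp, rfl⟩ := mem_image.1 hx
      exact hfin.mem_toFinset.1 hp)
    fun x hx => by
      obtain ⟨e, he, rfl | rfl⟩ := mem_segmentEndpoints.1 hx
      · exact mem_image_of_mem emb (hfin.mem_toFinset.2
          (hS.segment_subset_frontier he (left_mem_segment ℝ _ _)))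
      · exact mem_image_of_mem emb (hfin.mem_toFinset.2
          (hS.segment_subset_frontier he (right_mem_segment ℝ _ _)))
  rw [sum_congr rfl hcard, sum_add_distrib, card_image_of_injective _ emb_injective] at key
  rw [Set.ncard_eq_toFinset_card _ hfin]
  simpa using key

theorem sum_sum_ite_eq_sum_card_smul {α β M : Type*} [AddCommMonoid M] (A : Finset α)
    (X : Finset β) (p : β → α → Prop) [∀ x, DecidablePred (p x)] (c : β → M) :
    ∑ ω ∈ A, ∑ x ∈ X, (if p x ω then c x else 0) = ∑ x ∈ X, #{ω ∈ A | p x ω} • c x := by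
  rw [sum_comm]
  exact sum_congr rfl fun x _ => by rw [← sum_filter, sum_const]

theorem sum_eta2 {A : Finset (ℤ × ℤ)} {T : Finset (Fin 3 → ℤ × ℤ)}
    (hvert : ∀ σ ∈ T, ∀ i, σ i ∈ A) (hinj : ∀ σ ∈ T, Function.Injective σ) :
    ∑ ω ∈ A, eta2 T ω = 3 * ∑ σ ∈ T, nvol2 (triSet σ) := by
  simp only [eta2]
  rw [sum_sum_ite_eq_sum_card_smul, mul_sum]
  refine sum_congr rfl fun σ hσ => ?_
  have hfilter : {ω ∈ A | ∃ i, σ i = ω} = univ.image σ := by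
    ext ω
    simp only [mem_filter, mem_image, mem_univ, true_and, and_iff_right_iff_imp]
    rintro ⟨i, rfl⟩
    exact hvert σ hσ i
  rw [hfilter, card_image_of_injective _ (hinj σ hσ), card_univ, Fintype.card_fin, nsmul_eq_mul]
  norm_num

theorem sum_eta1 {A : Finset (ℤ × ℤ)} {E : Finset ((ℤ × ℤ) × (ℤ × ℤ))}
    (hE : ∀ e ∈ E, e.1 ∈ A ∧ e.2 ∈ A ∧ e.1 ≠ e.2) :
    ∑ ω ∈ A, eta1 E ω = 2 * ∑ e ∈ E, (llen e : ℝ) := by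
  simp only [eta1]
  rw [sum_sum_ite_eq_sum_card_smul, mul_sum]
  refine sum_congr rfl fun e he => ?_
  obtain ⟨h1, h2, hne⟩ := hE e he
  have hfilter : {ω ∈ A | e.1 = ω ∨ e.2 = ω} = {e.1, e.2} := by
    ext ω
    simp only [mem_filter, mem_insert, mem_singleton]
    constructor
    · rintro ⟨-, rfl | rfl⟩ <;> simp
    · rintro (rfl | rfl) <;> simp [h1, h2]
  rw [hfilter, card_pair hne, nsmul_eq_mul]
  norm_num

theorem nvol2_biUnion_triSet {T : Finset (Fin 3 → ℤ × ℤ)}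
    (hdisj : ∀ σ ∈ T, ∀ τ ∈ T, σ ≠ τ → volume (triSet σ ∩ triSet τ) = 0) :
    nvol2 (⋃ σ ∈ T, triSet σ) = ∑ σ ∈ T, nvol2 (triSet σ) := by
  have hcpt : ∀ σ, IsCompact (triSet σ) := fun σ =>
    ((Set.finite_range σ).image emb).isCompact_convexHull ℝ
  rw [nvol2, measure_biUnion_finset₀ hdisj
      fun σ _ => (hcpt σ).isClosed.measurableSet.nullMeasurableSet,
    ENNReal.toReal_sum fun σ _ => (hcpt σ).measure_lt_top.ne, mul_sum]
  rfl

theorem stmt3_general (A : Finset (ℤ × ℤ)) (T : Finset (Fin 3 → ℤ × ℤ))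
    (E : Finset ((ℤ × ℤ) × (ℤ × ℤ)))
    (Q : Set (ℝ × ℝ)) (hQ : Q = convexHull ℝ (emb '' (A : Set (ℤ × ℤ))))
    (hdim : (interior Q).Nonempty)
    (hvert : ∀ σ ∈ T, ∀ i, σ i ∈ A)
    (hind : ∀ σ ∈ T, AffineIndependent ℝ (emb ∘ σ))
    (hcover : (⋃ σ ∈ T, triSet σ) = Q)
    (hdisj : ∀ σ ∈ T, ∀ τ ∈ T, σ ≠ τ → volume (triSet σ ∩ triSet τ) = 0)
    (hE : ∀ e ∈ E, e.1 ∈ A ∧ e.2 ∈ A ∧ e.1 ≠ e.2)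
    (hEbd : (⋃ e ∈ E, seg e) = frontier Q)
    (hEdisj : ∀ e ∈ E, ∀ f ∈ E, e ≠ f → (seg e ∩ seg f).Subsingleton) :
    (1 / 2 : ℝ) * ∑ ω ∈ A, xiT T E ω =
      3 * nvol2 Q - (({p : ℤ × ℤ | emb p ∈ frontier Q}).ncard : ℝ) := by
  have hQc : IsClosed Q := hQ ▸ ((A.finite_toSet.image emb).isCompact_convexHull ℝ).isClosed
  have hS : IsBoundarySubdivision Q E (fun e => emb e.1) (fun e => emb e.2) :=
    ⟨hQ ▸ convex_convexHull ℝ _, hQc, hdim, fun e he h => (hE e he).2.2 (emb_injective h),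
      hEbd, hEdisj⟩
  have harea : ∑ ω ∈ A, eta2 T ω = 3 * nvol2 Q := by
    rw [sum_eta2 hvert fun σ hσ => (hind σ hσ).injective.of_comp, ← nvol2_biUnion_triSet hdisj,
      hcover]
  have hbdry : ∑ ω ∈ A, eta1 E ω = 2 * ({p : ℤ × ℤ | emb p ∈ frontier Q}.ncard : ℝ) := by
    rw [sum_eta1 hE, ← sum_llen_eq_ncard hS, Nat.cast_sum]
  simp only [xiT, sum_sub_distrib, ← mul_sum, harea, hbdry]
  ring

/-- The degree of the Hurwitz form in Plücker coordinates, computed as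
`(1/2)·Σᵢ ξ_T(ωᵢ)` for any triangulation `T` of `(Q, A)`, equals
`3·vol(Q) − vol(∂Q)`. -/
theorem stmt3 (A : Finset (ℤ × ℤ)) (T : Finset (Fin 3 → ℤ × ℤ))
    (E : Finset ((ℤ × ℤ) × (ℤ × ℤ)))
    (Q : Set (ℝ × ℝ)) (hQ : Q = convexHull ℝ (emb '' (A : Set (ℤ × ℤ))))
    (hdim : (interior Q).Nonempty)
    (hvert : ∀ σ ∈ T, ∀ i, σ i ∈ A)
    (hind : ∀ σ ∈ T, AffineIndependent ℝ (emb ∘ σ))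
    (hcover : (⋃ σ ∈ T, triSet σ) = Q)
    (hdisj : ∀ σ ∈ T, ∀ τ ∈ T, σ ≠ τ → volume (triSet σ ∩ triSet τ) = 0)
    (hE : ∀ e ∈ E, e.1 ∈ A ∧ e.2 ∈ A ∧ e.1 ≠ e.2)
    (hEbd : (⋃ e ∈ E, seg e) = frontier Q)
    (hEdisj : ∀ e ∈ E, ∀ f ∈ E, e ≠ f → (seg e ∩ seg f).Subsingleton)
    (hTE : ∀ e ∈ E, ∃ σ ∈ T, (∃ i, σ i = e.1) ∧ (∃ j, σ j = e.2)) :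
    (1 / 2 : ℝ) * ∑ ω ∈ A, xiT T E ω =
      3 * nvol2 Q - (({p : ℤ × ℤ | emb p ∈ frontier Q}).ncard : ℝ) :=
  stmt3_general A T E Q hQ hdim hvert hind hcover hdisj hE hEbd hEdisj
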